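/- arXiv:2604.27588 — 5 statements merged into one kernel-verified Lean document; each statement's English description precedes it below -/
import Mathlib

section
/- A topological space is quasi-pseudomodulable if and only if it is quasi-pseudometrizable. -/
/-!
For a quasi-pseudometric modular `w`, the gauge `g(x, y) = inf_{t > 0} (t + w(t, x, y))` is an
extended quasi-pseudometric: the triangle inequality for `g` is the modular inequality
`w(t + s, x, y) ≤ w(t, x, z) + w(s, z, y)` with the two parameters added. Since `w` is antitone
in `t`, the ball `g(x, ·) < min t ε` lies in `W_{t,ε}(x)`, and `W_{r/2,r/2}(x)` lies in the ball
`g(x, ·) < r`; so `d = min 1 g`, cut off because `g` may be `∞`, is a real quasi-pseudometric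
with the topology of `w`.
Conversely, a quasi-pseudometric `d` is the modular `w(t, x, y) = d(x, y)`, constant in `t`.
-/

open scoped ENNReal

/-- A set is open for the topology associated to a quasi-pseudometric modular `w`
iff every point has a basic modular neighborhood `W_{t,ε}(x)` inside it. -/
def modOpen {X : Type*} (w : ℝ → X → X → ℝ≥0∞) (G : Set X) : Prop :=
  ∀ x ∈ G, ∃ t ε : ℝ, 0 < t ∧ 0 < ε ∧ {y : X | w t x y < ENNReal.ofReal ε} ⊆ G

/-- A topological space is quasi-pseudomodulable if its topology is the topology
associated to some quasi-pseudometric modular. -/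
def QuasiPseudomodulable (X : Type*) [TopologicalSpace X] : Prop :=
  ∃ w : ℝ → X → X → ℝ≥0∞,
    (∀ t : ℝ, 0 < t → ∀ x : X, w t x x = 0) ∧
    (∀ (x y z : X) (t s : ℝ), 0 < t → 0 < s →
      w (t + s) x y ≤ w t x z + w s z y) ∧
    (∀ G : Set X, IsOpen G ↔ modOpen w G)

/-- A topological space is quasi-pseudometrizable if its topology is the open-ball
topology of some quasi-pseudometric. -/
def QuasiPseudometrizable (X : Type*) [TopologicalSpace X] : Prop :=
  ∃ d : X → X → ℝ,
    (∀ x y : X, 0 ≤ d x y) ∧ (∀ x : X, d x x = 0) ∧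
    (∀ x y z : X, d x y ≤ d x z + d z y) ∧
    (∀ G : Set X, IsOpen G ↔ ∀ x ∈ G, ∃ ε : ℝ, 0 < ε ∧ {y : X | d x y < ε} ⊆ G)

open ENNReal

section Truncation

variable {t a b c : ℝ≥0∞}

theorem ENNReal.truncateToReal_le_add (ht : t ≠ ∞) (h : a ≤ b + c) :
    truncateToReal t a ≤ truncateToReal t b + truncateToReal t c := by
  have hmin : min t a ≤ min t b + min t c := by
    rcases le_total t b with htb | hbt
    · exact min_le_left t a |>.trans <| (min_eq_left htb).ge.trans le_self_add
    rcases le_total t c with htc | hct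
    · exact min_le_left t a |>.trans <| (min_eq_left htc).ge.trans le_add_self
    rw [min_eq_right hbt, min_eq_right hct]
    exact (min_le_right t a).trans h
  have hfin : ∀ x, min t x ≠ ∞ := fun x => ne_top_of_le_ne_top ht (min_le_left t x)
  rw [truncateToReal, truncateToReal, truncateToReal, ← toReal_add (hfin b) (hfin c)]
  exact toReal_mono (add_ne_top.2 ⟨hfin b, hfin c⟩) hmin

theorem ENNReal.truncateToReal_lt_of_lt_ofReal {r : ℝ} (h : a < ENNReal.ofReal r) :
    truncateToReal t a < r :=
  toReal_lt_of_lt_ofReal ((min_le_right t a).trans_lt h)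

theorem ENNReal.lt_ofReal_of_truncateToReal_lt {r : ℝ} (ht : t ≠ ∞) (hrt : r ≤ t.toReal)
    (h : truncateToReal t a < r) : a < ENNReal.ofReal r := by
  have hlt : min t a < ENNReal.ofReal r :=
    (lt_ofReal_iff_toReal_lt (ne_top_of_le_ne_top ht (min_le_left t a))).2 h
  have hat : a < t := (min_lt_iff.1 (hlt.trans_le (ofReal_le_of_le_toReal hrt))).resolve_left
    (lt_irrefl t)
  rwa [min_eq_right hat.le] at hlt

end Truncation

section Modular

variable {X : Type*} {w : ℝ → X → X → ℝ≥0∞}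

theorem modOpen_iff_of_forall_exists {d : X → X → ℝ}
    (hwd : ∀ x t ε, 0 < t → 0 < ε →
      ∃ r > 0, ∀ y, d x y < r → w t x y < ENNReal.ofReal ε)
    (hdw : ∀ x r, 0 < r →
      ∃ t ε, 0 < t ∧ 0 < ε ∧ ∀ y, w t x y < ENNReal.ofReal ε → d x y < r)
    (G : Set X) :
    modOpen w G ↔ ∀ x ∈ G, ∃ ε : ℝ, 0 < ε ∧ {y : X | d x y < ε} ⊆ G := by
  constructor
  · intro hG x hx
    obtain ⟨t, ε, ht, hε, hsub⟩ := hG x hx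
    obtain ⟨r, hr, hball⟩ := hwd x t ε ht hε
    exact ⟨r, hr, fun y hy => hsub (hball y hy)⟩
  · intro hG x hx
    obtain ⟨r, hr, hsub⟩ := hG x hx
    obtain ⟨t, ε, ht, hε, hball⟩ := hdw x r hr
    exact ⟨t, ε, ht, hε, fun y hy => hsub (hball y hy)⟩

structure IsQuasiPseudometricModular (w : ℝ → X → X → ℝ≥0∞) : Prop where
  apply_self : ∀ t : ℝ, 0 < t → ∀ x : X, w t x x = 0
  add_le : ∀ (x y z : X) (t s : ℝ), 0 < t → 0 < s → w (t + s) x y ≤ w t x z + w s z y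

theorem IsQuasiPseudometricModular.antitone (hw : IsQuasiPseudometricModular w) {t t' : ℝ}
    (ht' : 0 < t') (htt' : t' ≤ t) (x y : X) : w t x y ≤ w t' x y := by
  rcases htt'.eq_or_lt with rfl | hlt
  · exact le_rfl
  calc w t x y = w (t' + (t - t')) x y := by rw [add_sub_cancel]
    _ ≤ w t' x y + w (t - t') y y := hw.add_le x y y t' (t - t') ht' (sub_pos.2 hlt)
    _ = w t' x y := by rw [hw.apply_self _ (sub_pos.2 hlt) y, add_zero]

variable (w) in
noncomputable def modularGauge (x y : X) : ℝ≥0∞ :=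
  ⨅ (t : ℝ) (_ : 0 < t), ENNReal.ofReal t + w t x y

theorem modularGauge_le {t : ℝ} (ht : 0 < t) (x y : X) :
    modularGauge w x y ≤ ENNReal.ofReal t + w t x y :=
  iInf₂_le t ht

theorem modularGauge_self (hw_self : ∀ t : ℝ, 0 < t → ∀ x : X, w t x x = 0) (x : X) :
    modularGauge w x x = 0 := by
  refine le_antisymm (ENNReal.le_of_forall_pos_le_add fun ε hε _ => ?_) zero_le
  calc modularGauge w x x ≤ ENNReal.ofReal ε + w ε x x := modularGauge_le hε x x
    _ = 0 + ε := by rw [hw_self ε hε x, add_zero, zero_add, ofReal_coe_nnreal]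

theorem modularGauge_triangle
    (hw_add : ∀ (x y z : X) (t s : ℝ), 0 < t → 0 < s → w (t + s) x y ≤ w t x z + w s z y)
    (x y z : X) : modularGauge w x y ≤ modularGauge w x z + modularGauge w z y :=
  le_iInf₂_add_iInf₂ fun t ht s hs => calc
    modularGauge w x y ≤ ENNReal.ofReal (t + s) + w (t + s) x y :=
        modularGauge_le (add_pos ht hs) x y
    _ ≤ (ENNReal.ofReal t + ENNReal.ofReal s) + (w t x z + w s z y) :=
        add_le_add ofReal_add_le (hw_add x y z t s ht hs)
    _ = (ENNReal.ofReal t + w t x z) + (ENNReal.ofReal s + w s z y) :=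
        add_add_add_comm _ _ _ _

theorem IsQuasiPseudometricModular.lt_of_modularGauge_lt (hw : IsQuasiPseudometricModular w)
    {x y : X} {t ε r : ℝ} (hrt : r ≤ t) (hrε : r ≤ ε)
    (h : modularGauge w x y < ENNReal.ofReal r) : w t x y < ENNReal.ofReal ε := by
  obtain ⟨t', ht', hlt⟩ :
      ∃ t', ∃ _ : 0 < t', ENNReal.ofReal t' + w t' x y < ENNReal.ofReal r := by
    simpa only [modularGauge, iInf_lt_iff] using h
  have ht't : t' ≤ t := ((ofReal_lt_ofReal_iff'.1 (le_self_add.trans_lt hlt)).1.trans_le hrt).le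
  calc w t x y ≤ w t' x y := hw.antitone ht' ht't x y
    _ ≤ ENNReal.ofReal t' + w t' x y := le_add_self
    _ < ENNReal.ofReal r := hlt
    _ ≤ ENNReal.ofReal ε := ofReal_le_ofReal hrε

theorem modularGauge_lt {x y : X} {t : ℝ} (ht : 0 < t) (h : w t x y < ENNReal.ofReal t) :
    modularGauge w x y < ENNReal.ofReal (t + t) :=
  calc modularGauge w x y ≤ ENNReal.ofReal t + w t x y := modularGauge_le ht x y
    _ < ENNReal.ofReal t + ENNReal.ofReal t := ENNReal.add_lt_add_left ofReal_ne_top h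
    _ = ENNReal.ofReal (t + t) := (ofReal_add ht.le ht.le).symm

theorem IsQuasiPseudometricModular.modOpen_iff (hw : IsQuasiPseudometricModular w)
    (G : Set X) :
    modOpen w G ↔ ∀ x ∈ G, ∃ ε : ℝ, 0 < ε ∧
      {y : X | truncateToReal 1 (modularGauge w x y) < ε} ⊆ G :=
  modOpen_iff_of_forall_exists (d := fun x y => truncateToReal 1 (modularGauge w x y))
    (fun _ t ε ht hε => ⟨min 1 (min t ε), by positivity, fun _ hy =>
      hw.lt_of_modularGauge_lt ((min_le_right _ _).trans (min_le_left _ _))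
        ((min_le_right _ _).trans (min_le_right _ _))
        (lt_ofReal_of_truncateToReal_lt one_ne_top
          (by rw [toReal_one]; exact min_le_left _ _) hy)⟩)
    (fun _ r hr => ⟨r / 2, r / 2, half_pos hr, half_pos hr, fun _ hy =>
      truncateToReal_lt_of_lt_ofReal <| by
        simpa only [add_halves] using modularGauge_lt (half_pos hr) hy⟩)
    G

theorem modOpen_const_iff (d : X → X → ℝ) (G : Set X) :
    modOpen (fun _ x y => ENNReal.ofReal (d x y)) G ↔
      ∀ x ∈ G, ∃ ε : ℝ, 0 < ε ∧ {y : X | d x y < ε} ⊆ G :=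
  modOpen_iff_of_forall_exists
    (fun _ _ ε _ hε => ⟨ε, hε, fun _ hy => (ofReal_lt_ofReal_iff hε).2 hy⟩)
    (fun _ r hr => ⟨1, r, one_pos, hr, fun _ hy => (ofReal_lt_ofReal_iff hr).1 hy⟩) G

theorem IsQuasiPseudometricModular.quasiPseudometrizable [TopologicalSpace X]
    (hw : IsQuasiPseudometricModular w) (hopen : ∀ G : Set X, IsOpen G ↔ modOpen w G) :
    QuasiPseudometrizable X :=
  ⟨fun x y => truncateToReal 1 (modularGauge w x y), fun _ _ => truncateToReal_nonneg,
    fun x => by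
      simp only [modularGauge_self hw.apply_self, truncateToReal, min_zero, toReal_zero],
    fun x y z => truncateToReal_le_add one_ne_top (modularGauge_triangle hw.add_le x y z),
    fun G => (hopen G).trans (hw.modOpen_iff G)⟩

theorem quasiPseudomodulable_of_quasiPseudometric [TopologicalSpace X] {d : X → X → ℝ}
    (hd_self : ∀ x : X, d x x = 0) (hd_triangle : ∀ x y z : X, d x y ≤ d x z + d z y)
    (hopen : ∀ G : Set X, IsOpen G ↔
      ∀ x ∈ G, ∃ ε : ℝ, 0 < ε ∧ {y : X | d x y < ε} ⊆ G) :
    QuasiPseudomodulable X :=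
  ⟨fun _ x y => ENNReal.ofReal (d x y), fun _ _ x => ofReal_eq_zero.2 (hd_self x).le,
    fun x y z _ _ _ _ => (ofReal_le_ofReal (hd_triangle x y z)).trans ofReal_add_le,
    fun G => (hopen G).trans (modOpen_const_iff d G).symm⟩

end Modular

/-- a topological space is quasi-pseudomodulable iff it is
quasi-pseudometrizable. -/
theorem stmt_4 (X : Type*) [TopologicalSpace X] :
    QuasiPseudomodulable X ↔ QuasiPseudometrizable X := by
  constructor
  · rintro ⟨w, hw_self, hw_add, hopen⟩
    exact IsQuasiPseudometricModular.quasiPseudometrizable ⟨hw_self, hw_add⟩ hopen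
  · rintro ⟨d, -, hd_self, hd_triangle, hopen⟩
    exact quasiPseudomodulable_of_quasiPseudometric hd_self hd_triangle hopen
end

section
/- There exists a metric modular space (X,w) and a point x ∈ X and parameters t,ε > 0 such that the set W_{t,ε}(x) = {y : w(t,x,y) < ε} is not open in the topology T(w). Concretely, take X = {x,y} ∪ {z_n : n ∈ ℕ} with w(t,x,y) = 1 for t < 1 and 0 for t ≥ 1; w(t,x,z_n) = 1 for t ≤ 1 and 0 for t > 1; w(t,y,z_n) = 1/n for t < 1 and 0 for t ≥ 1; w(t,z_n,z_m) = 1/min(n,m) for t < 1 and 0 for t ≥ 1; extended symmetrically with w(t,a,a) = 0. Then W_{1,1/2}(x) is not open in T(w). -/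
open scoped ENNReal

/-- The underlying set: `Sum.inl false = x`, `Sum.inl true = y`,
`Sum.inr n = z_{n+1}`. -/
abbrev ExPt : Type := Bool ⊕ ℕ

/-- The concrete metric modular of the counterexample (with `z_n` indexed by
`n : ℕ`, standing for `z_{n+1}`, so that `1/n` becomes `1/(n+1)`). -/
noncomputable def wEx (t : ℝ) : ExPt → ExPt → ℝ≥0∞
  | Sum.inl a, Sum.inl b =>
      if a = b then 0 else (if t < 1 then 1 else 0)
  | Sum.inl false, Sum.inr _ => if t ≤ 1 then 1 else 0
  | Sum.inr _, Sum.inl false => if t ≤ 1 then 1 else 0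
  | Sum.inl true, Sum.inr n => if t < 1 then ((n : ℝ≥0∞) + 1)⁻¹ else 0
  | Sum.inr n, Sum.inl true => if t < 1 then ((n : ℝ≥0∞) + 1)⁻¹ else 0
  | Sum.inr n, Sum.inr m =>
      if n = m then 0 else (if t < 1 then ((min n m : ℕ) + 1 : ℝ≥0∞)⁻¹ else 0)

/-! For `t < 1` the modular `wEx t` is the distance `d a b = 1 / (min (ι a) (ι b) + 1)` between
distinct points, where `ι x = 0`, `ι y = ∞`, `ι z_n = n`; such a "minimum-index" distance is an
ultrametric. For `t > 1` the modular vanishes, and `wEx t ≤ d` for every `t`, which gives the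
triangle inequality. The set `W_{1,1/2}(x)` contains `y` but no `z_n`, while every `W_{t,ε}(y)`
contains `z_n` for large `n`, because `wEx t y z_n ≤ 1 / (n + 1)`. -/

section MinIndexDist

variable {α β : Type*} [DecidableEq α] [LinearOrder β]

def minIndexDist (ι : α → β) (f : β → ℝ≥0∞) (a b : α) : ℝ≥0∞ :=
  if a = b then 0 else f (min (ι a) (ι b))

theorem minIndexDist_le_max {ι : α → β} {f : β → ℝ≥0∞} (hf : Antitone f) (a b c : α) :
    minIndexDist ι f a b ≤ max (minIndexDist ι f a c) (minIndexDist ι f c b) := by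
  unfold minIndexDist
  by_cases hab : a = b
  · simp [hab]
  by_cases hac : a = c
  · subst hac; simp [hab]
  by_cases hcb : c = b
  · subst hcb; simp [hac]
  rw [if_neg hab, if_neg hac, if_neg hcb, ← hf.map_min]
  exact hf (min_le_min (min_le_left _ _) (min_le_right _ _))

end MinIndexDist

theorem ENat.antitone_inv_toENNReal_add_one : Antitone fun n : ℕ∞ => ((n : ℝ≥0∞) + 1)⁻¹ :=
  fun _ _ h => ENNReal.inv_le_inv.mpr (by gcongr)

def exIndex : ExPt → ℕ∞
  | Sum.inl false => 0
  | Sum.inl true => ⊤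
  | Sum.inr n => n

noncomputable def exDist : ExPt → ExPt → ℝ≥0∞ :=
  minIndexDist exIndex fun n => ((n : ℝ≥0∞) + 1)⁻¹

theorem wEx_le_exDist (t : ℝ) (a b : ExPt) : wEx t a b ≤ exDist a b := by
  rcases a with (_ | _) | n <;> rcases b with (_ | _) | m <;>
    simp [wEx, exDist, minIndexDist, exIndex, Nat.mono_cast.map_min] <;> split_ifs <;> simp

theorem wEx_eq_exDist {t : ℝ} (ht : t < 1) (a b : ExPt) : wEx t a b = exDist a b := by
  rcases a with (_ | _) | n <;> rcases b with (_ | _) | m <;>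
    simp [wEx, exDist, minIndexDist, exIndex, ht, ht.le, Nat.mono_cast.map_min]

theorem wEx_eq_zero {t : ℝ} (ht : 1 < t) (a b : ExPt) : wEx t a b = 0 := by
  rcases a with (_ | _) | n <;> rcases b with (_ | _) | m <;>
    simp [wEx, not_lt_of_gt ht, not_le_of_gt ht]

theorem exDist_eq_zero_iff {a b : ExPt} : exDist a b = 0 ↔ a = b := by
  rcases a with (_ | _) | n <;> rcases b with (_ | _) | m <;>
    simp [exDist, minIndexDist, exIndex]

theorem wEx_self (t : ℝ) (a : ExPt) : wEx t a a = 0 :=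
  nonpos_iff_eq_zero.mp ((wEx_le_exDist t a a).trans_eq (exDist_eq_zero_iff.mpr rfl))

theorem wEx_add_le {t s : ℝ} (ht : 0 < t) (hs : 0 < s) (a b c : ExPt) :
    wEx (t + s) a b ≤ wEx t a c + wEx s c b := by
  rcases lt_or_ge 1 (t + s) with h | h
  · rw [wEx_eq_zero h]
    exact zero_le
  calc wEx (t + s) a b ≤ exDist a b := wEx_le_exDist _ a b
    _ ≤ max (exDist a c) (exDist c b) :=
      minIndexDist_le_max ENat.antitone_inv_toENNReal_add_one a b c
    _ ≤ exDist a c + exDist c b := max_le le_self_add le_add_self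
    _ = wEx t a c + wEx s c b := by
      rw [wEx_eq_exDist (by linarith), wEx_eq_exDist (by linarith)]

theorem wEx_comm (t : ℝ) (a b : ExPt) : wEx t a b = wEx t b a := by
  rcases a with (_ | _) | n <;> rcases b with (_ | _) | m <;> simp [wEx, Nat.min_comm, eq_comm]

theorem wEx_not_modOpen :
    ¬ modOpen wEx {q : ExPt | wEx 1 (Sum.inl false) q < ENNReal.ofReal (1 / 2)} := by
  intro hopen
  obtain ⟨t, ε, -, hε, hsub⟩ := hopen (Sum.inl true) (by simp [wEx])
  obtain ⟨n, hn⟩ := ENNReal.exists_inv_nat_lt (ENNReal.ofReal_pos.mpr hε).ne'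
  have hz : wEx t (Sum.inl true) (Sum.inr n) < ENNReal.ofReal ε := calc
    wEx t (Sum.inl true) (Sum.inr n) ≤ ((n : ℝ≥0∞) + 1)⁻¹ := wEx_le_exDist t _ _
    _ ≤ (n : ℝ≥0∞)⁻¹ := ENNReal.inv_le_inv.mpr le_self_add
    _ < ENNReal.ofReal ε := hn
  have hx := hsub hz
  norm_num [wEx] at hx

/-- `wEx` is a metric modular on `ExPt`, yet the set
`W_{1,1/2}(x)` is not open in the associated topology `T(wEx)`. -/
theorem stmt_6 :
    -- (M1)
    (∀ t : ℝ, 0 < t → ∀ a : ExPt, wEx t a a = 0) ∧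
    -- (M2)
    (∀ (a b c : ExPt) (t s : ℝ), 0 < t → 0 < s →
      wEx (t + s) a b ≤ wEx t a c + wEx s c b) ∧
    -- (M4) symmetry
    (∀ (a b : ExPt) (t : ℝ), 0 < t → wEx t a b = wEx t b a) ∧
    -- (M3) non-degeneracy
    (∀ a b : ExPt, (∀ t : ℝ, 0 < t → wEx t a b = 0 ∧ wEx t b a = 0) → a = b) ∧
    -- `W_{1,1/2}(x)` is not open
    ¬ modOpen wEx
        {q : ExPt | wEx 1 (Sum.inl false) q < ENNReal.ofReal (1 / 2)} := by
  refine ⟨fun t _ a => wEx_self t a, fun a b c t s ht hs => wEx_add_le ht hs a b c,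
    fun a b t _ => wEx_comm t a b, fun a b h => ?_, wEx_not_modOpen⟩
  rw [← exDist_eq_zero_iff, ← wEx_eq_exDist (t := 1 / 2) (by norm_num)]
  exact (h _ (by norm_num)).1
end

section
/- If f : (X,w₁) → (Y,w₂) is strongly uniformly continuous between quasi-pseudometric modular spaces, then f is also strongly uniformly continuous as a map (X, w̃₁) → (Y, w̃₂) between the left regularizations; moreover for (Y,w₂) left-continuous, f : (X,w₁) → (Y,w₂) is strongly uniformly continuous iff f : (X,w̃₁) → (Y,w₂) is. -/
open scoped ENNReal

/-- The left regularization of a quasi-pseudometric modular. -/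
noncomputable def leftReg {X : Type*} (w : ℝ → X → X → ℝ≥0∞)
    (t : ℝ) (x y : X) : ℝ≥0∞ :=
  ⨅ (s : ℝ) (_ : s ∈ Set.Ioo 0 t), w s x y

/-- `f` is strongly uniformly continuous from `(X,w₁)` to `(Y,w₂)`. -/
def StronglyUC {X Y : Type*} (w₁ : ℝ → X → X → ℝ≥0∞) (w₂ : ℝ → Y → Y → ℝ≥0∞)
    (f : X → Y) : Prop :=
  ∀ t : ℝ, 0 < t → ∃ s : ℝ, 0 < s ∧ ∀ x y : X, w₂ t (f x) (f y) ≤ w₁ s x y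

/-! A modular is antitone in `t` (triangle inequality through `y`, with `w (t - u) y y = 0`),
so `w t ≤ w̃ t ≤ w s` whenever `0 < s < t`: regularizing either modular only shifts the
parameter, which strong uniform continuity absorbs by halving it. -/

section

variable {X Y : Type*}

lemma modular_le_of_lt (w : ℝ → X → X → ℝ≥0∞)
    (hM1 : ∀ t : ℝ, 0 < t → ∀ x : X, w t x x = 0)
    (hM2 : ∀ (x y z : X) (t s : ℝ), 0 < t → 0 < s →
      w (t + s) x y ≤ w t x z + w s z y)
    {u t : ℝ} (hu : 0 < u) (hut : u < t) (x y : X) :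
    w t x y ≤ w u x y := by
  have h := hM2 x y y u (t - u) hu (sub_pos.mpr hut)
  rwa [hM1 (t - u) (sub_pos.mpr hut) y, add_zero, add_sub_cancel] at h

lemma le_leftReg (w : ℝ → X → X → ℝ≥0∞)
    (hM1 : ∀ t : ℝ, 0 < t → ∀ x : X, w t x x = 0)
    (hM2 : ∀ (x y z : X) (t s : ℝ), 0 < t → 0 < s →
      w (t + s) x y ≤ w t x z + w s z y)
    (t : ℝ) (x y : X) :
    w t x y ≤ leftReg w t x y :=
  le_iInf₂ fun _ hs => modular_le_of_lt w hM1 hM2 hs.1 hs.2 x y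

lemma leftReg_le (w : ℝ → X → X → ℝ≥0∞) {s t : ℝ} (hs : s ∈ Set.Ioo 0 t) (x y : X) :
    leftReg w t x y ≤ w s x y :=
  iInf₂_le s hs

lemma leftReg_le_half (w : ℝ → X → X → ℝ≥0∞) {t : ℝ} (ht : 0 < t) (x y : X) :
    leftReg w t x y ≤ w (t / 2) x y :=
  leftReg_le w ⟨half_pos ht, half_lt_self ht⟩ x y

namespace StronglyUC

variable {w₁ : ℝ → X → X → ℝ≥0∞} {w₂ : ℝ → Y → Y → ℝ≥0∞} {f : X → Y}

lemma leftReg_target (h : StronglyUC w₁ w₂ f) : StronglyUC w₁ (leftReg w₂) f := by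
  intro t ht
  obtain ⟨s, hs, hle⟩ := h (t / 2) (half_pos ht)
  exact ⟨s, hs, fun x y => (leftReg_le_half w₂ ht _ _).trans (hle x y)⟩

lemma leftReg_source
    (hM1 : ∀ t : ℝ, 0 < t → ∀ x : X, w₁ t x x = 0)
    (hM2 : ∀ (x y z : X) (t s : ℝ), 0 < t → 0 < s →
      w₁ (t + s) x y ≤ w₁ t x z + w₁ s z y)
    (h : StronglyUC w₁ w₂ f) : StronglyUC (leftReg w₁) w₂ f := by
  intro t ht
  obtain ⟨s, hs, hle⟩ := h t ht
  exact ⟨s, hs, fun x y => (hle x y).trans (le_leftReg w₁ hM1 hM2 s x y)⟩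

lemma of_leftReg_source (h : StronglyUC (leftReg w₁) w₂ f) : StronglyUC w₁ w₂ f := by
  intro t ht
  obtain ⟨s, hs, hle⟩ := h t ht
  exact ⟨s / 2, half_pos hs, fun x y => (hle x y).trans (leftReg_le_half w₁ hs x y)⟩

end StronglyUC

end

theorem stmt_10_general {X Y : Type*} (w₁ : ℝ → X → X → ℝ≥0∞) (w₂ : ℝ → Y → Y → ℝ≥0∞)
    (hM1₁ : ∀ t : ℝ, 0 < t → ∀ x : X, w₁ t x x = 0)
    (hM2₁ : ∀ (x y z : X) (t s : ℝ), 0 < t → 0 < s →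
      w₁ (t + s) x y ≤ w₁ t x z + w₁ s z y)
    (f : X → Y) :
    (StronglyUC w₁ w₂ f → StronglyUC (leftReg w₁) (leftReg w₂) f) ∧
    ((∀ (x y : Y) (t : ℝ), 0 < t →
        w₂ t x y = ⨅ (s : ℝ) (_ : s ∈ Set.Ioo 0 t), w₂ s x y) →
      (StronglyUC w₁ w₂ f ↔ StronglyUC (leftReg w₁) w₂ f)) :=
  ⟨fun h => (h.leftReg_source hM1₁ hM2₁).leftReg_target,
    fun _ => ⟨StronglyUC.leftReg_source hM1₁ hM2₁, StronglyUC.of_leftReg_source⟩⟩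

/-- strong uniform continuity passes to left regularizations, and
when `w₂` is left-continuous, `f : (X,w₁) → (Y,w₂)` is strongly uniformly
continuous iff `f : (X,w̃₁) → (Y,w₂)` is. -/
theorem stmt_10 {X Y : Type*} (w₁ : ℝ → X → X → ℝ≥0∞) (w₂ : ℝ → Y → Y → ℝ≥0∞)
    (hM1₁ : ∀ t : ℝ, 0 < t → ∀ x : X, w₁ t x x = 0)
    (hM2₁ : ∀ (x y z : X) (t s : ℝ), 0 < t → 0 < s →
      w₁ (t + s) x y ≤ w₁ t x z + w₁ s z y)
    (hM1₂ : ∀ t : ℝ, 0 < t → ∀ x : Y, w₂ t x x = 0)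
    (hM2₂ : ∀ (x y z : Y) (t s : ℝ), 0 < t → 0 < s →
      w₂ (t + s) x y ≤ w₂ t x z + w₂ s z y)
    (f : X → Y) :
    (StronglyUC w₁ w₂ f → StronglyUC (leftReg w₁) (leftReg w₂) f) ∧
    ((∀ (x y : Y) (t : ℝ), 0 < t →
        w₂ t x y = ⨅ (s : ℝ) (_ : s ∈ Set.Ioo 0 t), w₂ s x y) →
      (StronglyUC w₁ w₂ f ↔ StronglyUC (leftReg w₁) w₂ f)) :=
  stmt_10_general w₁ w₂ hM1₁ hM2₁ f
end

section
/- Let ∇ be the lattice of non-increasing functions f : (0,∞) → [0,∞] with order f ≤^op g iff g ≤ f pointwise (so the top of ∇ is the constant 0 function 𝟎). For f ∈ ∇ with f not identically ∞: f ◁ 𝟎 in ∇ if and only if (1) there exists s > 0 such that f(t) = ∞ for all t ∈ (0,s), and (2) inf_{t>0} f(t) > 0. -/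
open scoped ENNReal

/-- The positive reals `(0,∞)`. -/
abbrev Rpos : Type := {t : ℝ // 0 < t}

/-- `∇`: non-increasing `[0,∞]`-valued functions on `(0,∞)` with the opposite
pointwise order (top element `𝟎` = the constant `0` function = `⊤`). -/
abbrev Nabla : Type := Rpos →o ℝ≥0∞ᵒᵈ

/-- `a` is well-below `b`. -/
def wellBelow {L : Type*} [CompleteLattice L] (a b : L) : Prop :=
  ∀ S : Set L, b ≤ sSup S → ∃ s ∈ S, a ≤ s

/-! `f ◁ 𝟎` is tested against two families whose supremum in `∇` is `𝟎`: the step functions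
that are `∞` on `(0, s]` and `0` afterwards force (1), and the constants `1/n` force (2).
Conversely, if `f = ∞` on `(0, s)` and `f ≥ m > 0`, then any family with supremum `𝟎` contains
some `g` with `g s < m`, and since `g` is non-increasing, `g ≤ f` pointwise. -/

theorem OrderHom.top_le_sSup_iff {α β : Type*} [Preorder α] [CompleteLinearOrder β]
    (S : Set (α →o β)) : ⊤ ≤ sSup S ↔ ∀ x, ∀ b < ⊤, ∃ g ∈ S, b < g x := by
  refine OrderHom.le_def.trans (forall_congr' fun x => ?_)
  change ⊤ ≤ ⨆ g ∈ S, g x ↔ _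
  simp only [top_le_iff, iSup_eq_top, lt_iSup_iff, exists_prop]

section

variable {α : Type*} [LinearOrder α]

noncomputable def topOnIic (s : α) : α →o ℝ≥0∞ᵒᵈ :=
  ⟨fun t => OrderDual.toDual (if t ≤ s then ⊤ else 0), fun a b hab => by
    by_cases hb : b ≤ s
    · simp [hb, hab.trans hb]
    · exact OrderDual.toDual_le_toDual.2 (by simp [hb])⟩

theorem topOnIic_apply (s t : α) :
    topOnIic s t = OrderDual.toDual (if t ≤ s then ⊤ else 0) :=
  rfl

theorem top_le_sSup_range_topOnIic [NoMinOrder α] :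
    (⊤ : α →o ℝ≥0∞ᵒᵈ) ≤ sSup (Set.range topOnIic) := by
  refine (OrderHom.top_le_sSup_iff _).2 fun t b hb => ?_
  obtain ⟨s, hst⟩ := exists_lt t
  refine ⟨topOnIic s, ⟨s, rfl⟩, ?_⟩
  rwa [topOnIic_apply, if_neg (not_le.2 hst)]

theorem top_le_sSup_range_const_inv_natCast :
    (⊤ : α →o ℝ≥0∞ᵒᵈ) ≤
      sSup (Set.range fun n : ℕ => OrderHom.const α (OrderDual.toDual (n : ℝ≥0∞)⁻¹)) := by
  refine (OrderHom.top_le_sSup_iff _).2 fun _ b hb => ?_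
  obtain ⟨n, hn⟩ := ENNReal.exists_inv_nat_lt (lt_top_iff_ne_top.1 hb)
  exact ⟨_, ⟨n, rfl⟩, hn⟩

theorem exists_forall_lt_eq_top_of_wellBelow_top [NoMinOrder α] {f : α →o ℝ≥0∞ᵒᵈ}
    (hf : wellBelow f ⊤) : ∃ s, ∀ t < s, OrderDual.ofDual (f t) = ⊤ := by
  obtain ⟨_, ⟨s, rfl⟩, hle⟩ := hf _ top_le_sSup_range_topOnIic
  refine ⟨s, fun t hts => top_le_iff.1 ?_⟩
  have hlet : f t ≤ topOnIic s t := hle t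
  rwa [topOnIic_apply, if_pos hts.le] at hlet

theorem pos_iInf_of_wellBelow_top {f : α →o ℝ≥0∞ᵒᵈ} (hf : wellBelow f ⊤) :
    0 < ⨅ t, OrderDual.ofDual (f t) := by
  obtain ⟨_, ⟨n, rfl⟩, hle⟩ := hf _ top_le_sSup_range_const_inv_natCast
  exact (ENNReal.inv_pos.2 (ENNReal.natCast_ne_top n)).trans_le (le_iInf hle)

theorem wellBelow_top_of_forall_lt_eq_top {f : α →o ℝ≥0∞ᵒᵈ} {s : α}
    (hs : ∀ t < s, OrderDual.ofDual (f t) = ⊤) (hpos : 0 < ⨅ t, OrderDual.ofDual (f t)) :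
    wellBelow f ⊤ := by
  intro S hS
  obtain ⟨g, hgS, hgs⟩ := (OrderHom.top_le_sSup_iff S).1 hS s _ hpos
  refine ⟨g, hgS, fun t => ?_⟩
  rcases lt_or_ge t s with hts | hst
  · change OrderDual.ofDual (g t) ≤ OrderDual.ofDual (f t)
    exact (hs t hts).symm ▸ le_top
  · calc OrderDual.ofDual (g t) ≤ OrderDual.ofDual (g s) := g.monotone hst
      _ ≤ ⨅ t, OrderDual.ofDual (f t) := hgs.le
      _ ≤ OrderDual.ofDual (f t) := iInf_le _ t

end

instance : NoMinOrder Rpos := inferInstanceAs (NoMinOrder (Set.Ioi (0 : ℝ)))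

theorem stmt_14_general (f : Nabla) :
    wellBelow f (⊤ : Nabla) ↔
      ((∃ s : Rpos, ∀ t : Rpos, t.1 < s.1 → OrderDual.ofDual (f t) = ⊤) ∧
        0 < ⨅ t : Rpos, OrderDual.ofDual (f t)) :=
  ⟨fun hf => ⟨exists_forall_lt_eq_top_of_wellBelow_top hf, pos_iInf_of_wellBelow_top hf⟩,
    fun ⟨⟨_, hs⟩, hpos⟩ => wellBelow_top_of_forall_lt_eq_top hs hpos⟩

/-- for `f ∈ ∇` not identically `∞`, `f ◁ 𝟎` iff
(1) `f = ∞` on some interval `(0,s)` and (2) `inf_{t>0} f(t) > 0`. -/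
theorem stmt_14 (f : Nabla) (hf : f ≠ ⊥) :
    wellBelow f (⊤ : Nabla) ↔
      ((∃ s : Rpos, ∀ t : Rpos, t.1 < s.1 → OrderDual.ofDual (f t) = ⊤) ∧
        0 < ⨅ t : Rpos, OrderDual.ofDual (f t)) :=
  stmt_14_general f
end

section
/- The lattice ∇ of non-increasing functions (0,∞) → [0,∞] with the opposite pointwise order is a value distributive lattice: it is completely distributive, its bottom (constant ∞) is well-below its top (constant 0), and if f ◁ 𝟎 and g ◁ 𝟎 then f ∨ g ◁ 𝟎 (the join taken in ∇, i.e., pointwise minimum in [0,∞]). -/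
open scoped ENNReal

/-! The elements `f ◁ 𝟎` of `∇` are exactly those lying below some step function
`step s v` (`∞` on `(0,s)`, `v > 0` on `[s,∞)`), i.e. those that are `∞` near `0` and bounded
below by a positive constant; this class is visibly closed under pointwise minima. Complete
distributivity comes from `step t v ◁ b` whenever `b t < v`: these steps approximate `b` from
below at every point `t`. -/

open OrderDual

theorem wellBelow.mono_left {L : Type*} [CompleteLattice L] {a a' b : L} (h : wellBelow a b)
    (ha : a' ≤ a) : wellBelow a' b := by
  intro S hS
  obtain ⟨s, hsS, has⟩ := h S hS
  exact ⟨s, hsS, ha.trans has⟩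

theorem wellBelow.le {L : Type*} [CompleteLattice L] {a b : L} (h : wellBelow a b) : a ≤ b := by
  obtain ⟨s, rfl, has⟩ := h {b} sSup_singleton.ge
  exact has

namespace Nabla

theorem le_iff {f g : Nabla} : f ≤ g ↔ ∀ t, ofDual (g t) ≤ ofDual (f t) := Iff.rfl

theorem sSup_apply (S : Set Nabla) (t : Rpos) :
    ofDual (sSup S t) = ⨅ f ∈ S, ofDual (f t) := by
  rw [OrderHom.sSup_apply]
  rfl

theorem top_apply (t : Rpos) : ofDual ((⊤ : Nabla) t) = 0 := rfl

noncomputable def step (s : Rpos) (v : ℝ≥0∞) : Nabla :=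
  ⟨fun t => toDual (if t < s then ⊤ else v), by
    intro a b hab
    simp only [toDual_le_toDual]
    split_ifs with ha hb
    · exact le_rfl
    · exact absurd (hab.trans_lt ha) hb
    · exact le_top
    · exact le_rfl⟩

theorem step_apply (s : Rpos) (v : ℝ≥0∞) (t : Rpos) :
    ofDual (step s v t) = if t < s then ⊤ else v := rfl

theorem step_le_iff {s : Rpos} {v : ℝ≥0∞} {f : Nabla} : step s v ≤ f ↔ ofDual (f s) ≤ v := by
  refine ⟨fun h => by simpa [step_apply] using le_iff.1 h s, fun h => le_iff.2 fun t => ?_⟩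
  rw [step_apply]
  split_ifs with ht
  · exact le_top
  · exact (show ofDual (f t) ≤ ofDual (f s) from f.mono (not_lt.1 ht)).trans h

theorem step_anti {s s' : Rpos} {v v' : ℝ≥0∞} (hs : s ≤ s') (hv : v ≤ v') :
    step s' v' ≤ step s v := by
  rw [step_le_iff, step_apply, if_neg (not_lt.2 hs)]
  exact hv

theorem step_wellBelow {b : Nabla} {s : Rpos} {v : ℝ≥0∞} (hv : ofDual (b s) < v) :
    wellBelow (step s v) b := by
  intro S hS
  have hinf : ⨅ f ∈ S, ofDual (f s) < v := (sSup_apply S s ▸ le_iff.1 hS s).trans_lt hv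
  simp only [iInf_lt_iff] at hinf
  obtain ⟨f, hfS, hfs⟩ := hinf
  exact ⟨f, hfS, step_le_iff.2 hfs.le⟩

theorem sSup_apply_le_of_step_mem {S : Set Nabla} {t : Rpos} {c : ℝ≥0∞}
    (hS : ∀ v, c < v → step t v ∈ S) : ofDual (sSup S t) ≤ c := by
  refine le_of_forall_gt_imp_ge_of_dense fun v hv => ?_
  rw [sSup_apply]
  simpa [step_apply] using iInf₂_le (f := fun f (_ : f ∈ S) => ofDual (f t)) _ (hS v hv)

theorem le_sSup_wellBelow (b : Nabla) : b ≤ sSup {a | wellBelow a b} :=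
  le_iff.2 fun _ => sSup_apply_le_of_step_mem fun _ hv => step_wellBelow hv

theorem top_le_sSup_step : (⊤ : Nabla) ≤ sSup {f | ∃ s, ∃ v > 0, f = step s v} :=
  le_iff.2 fun t => sSup_apply_le_of_step_mem fun v hv => ⟨t, v, hv, rfl⟩

theorem wellBelow_top_iff {f : Nabla} : wellBelow f ⊤ ↔ ∃ s, ∃ v > 0, f ≤ step s v := by
  constructor
  · intro hf
    obtain ⟨_, ⟨s, v, hv, rfl⟩, hfs⟩ := hf _ top_le_sSup_step
    exact ⟨s, v, hv, hfs⟩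
  · rintro ⟨s, v, hv, hfs⟩
    exact (step_wellBelow ((top_apply s).symm ▸ hv)).mono_left hfs

theorem wellBelow_top_sup {f g : Nabla} (hf : wellBelow f ⊤) (hg : wellBelow g ⊤) :
    wellBelow (f ⊔ g) ⊤ := by
  obtain ⟨s, v, hv, hfs⟩ := wellBelow_top_iff.1 hf
  obtain ⟨s', v', hv', hgs⟩ := wellBelow_top_iff.1 hg
  exact wellBelow_top_iff.2 ⟨min s s', min v v', lt_min hv hv',
    sup_le (hfs.trans (step_anti (min_le_left _ _) (min_le_left _ _)))
      (hgs.trans (step_anti (min_le_right _ _) (min_le_right _ _)))⟩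

end Nabla

/-- `∇` is a value distributive lattice: it is completely
distributive (Raney's characterization), `⊥ ◁ ⊤`, and the well-below class of
`⊤ = 𝟎` is closed under binary joins. -/
theorem stmt_15 :
    (∀ b : Nabla, b = sSup {a : Nabla | wellBelow a b}) ∧
    wellBelow (⊥ : Nabla) (⊤ : Nabla) ∧
    (∀ f g : Nabla, wellBelow f (⊤ : Nabla) → wellBelow g (⊤ : Nabla) →
      wellBelow (f ⊔ g) (⊤ : Nabla)) :=
  ⟨fun b => le_antisymm (Nabla.le_sSup_wellBelow b) (sSup_le fun _ ha => wellBelow.le ha),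
    Nabla.wellBelow_top_iff.2 ⟨⟨1, one_pos⟩, 1, one_pos, bot_le⟩,
    fun _ _ => Nabla.wellBelow_top_sup⟩
end
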